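/- Let k be a field, let E₁ and E₂ be elliptic curves over k (smooth Weierstrass curves, whose k-rational points form abelian groups), let P₀ ∈ E₁(k) satisfy 3·P₀ = 0, and let ω : E₂(k) → E₂(k) be an additive endomorphism satisfying ω(ω(Q)) + ω(Q) + Q = 0 for all Q ∈ E₂(k). Let T be an abelian group and c : E₁(k) × E₂(k) → T a function such that: (i) c(P, Q) = c(P + P₀, ω(Q)) for all P, Q; (ii) the function z(P, Q) := c(P, Q) − c(P, 0) − c(0, Q) + c(0, 0) is biadditive (additive in each variable separately); and (iii) 3·(c(P₀, Q) − c(0, Q)) = 0 for all Q ∈ E₂(k). Then 9·z(P, Q) = 0 for all P ∈ E₁(k) and Q ∈ E₂(k). -/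

import Mathlib

/-!
Write `z` for the mixed second difference of `c`. The invariance of `c` under
`(P, Q) ↦ (P + P₀, ω Q)` gives `z (P, ω Q) - z (P, Q) = z (P₀, Q) - z (P₀, ω Q)`, and
hypothesis (iii) makes `z (P₀, ·)` 3-torsion, so `3 • z (P, ω Q) = 3 • z (P, Q)`.
Applying `3 • z (P, ·)` to `ω (ω Q) + ω Q + Q = 0` then yields `9 • z (P, Q) = 0`.
-/

section MixedDifference

variable {A B T : Type*} [AddCommGroup A] [AddCommGroup B] [AddCommGroup T]

def mixedDiff (c : A × B → T) (P : A) (Q : B) : T :=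
  c (P, Q) - c (P, 0) - c (0, Q) + c (0, 0)

theorem mixedDiff_add_twist {c : A × B → T} {P₀ : A} {ω : B →+ B}
    (hinv : ∀ P Q, c (P, Q) = c (P + P₀, ω Q)) (P : A) (Q : B) :
    mixedDiff c (P + P₀) (ω Q) = mixedDiff c P Q - mixedDiff c (-P₀) Q := by
  have hQ : c (0, ω Q) = c (-P₀, Q) := by rw [hinv (-P₀) Q, neg_add_cancel]
  have hP : ∀ P, c (P + P₀, 0) = c (P, 0) := fun P => by rw [hinv P 0, map_zero]
  have h₀ : c (0, 0) = c (-P₀, 0) := by rw [← hP (-P₀), neg_add_cancel]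
  simp only [mixedDiff, ← hinv, hQ, hP, h₀]
  abel

theorem three_smul_mixedDiff_eq_zero {c : A × B → T} {P₀ : A}
    (htor : ∀ Q, 3 • (c (P₀, Q) - c (0, Q)) = 0) (Q : B) :
    3 • mixedDiff c P₀ Q = 0 := by
  have h : mixedDiff c P₀ Q = (c (P₀, Q) - c (0, Q)) - (c (P₀, 0) - c (0, 0)) := by
    unfold mixedDiff; abel
  rw [h, smul_sub, htor, htor, sub_zero]

theorem three_smul_apply_twist {c : A × B → T} {P₀ : A} {ω : B →+ B} {f : A →+ B →+ T}
    (hf : ∀ P Q, f P Q = mixedDiff c P Q)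
    (hinv : ∀ P Q, c (P, Q) = c (P + P₀, ω Q))
    (htor : ∀ Q, 3 • (c (P₀, Q) - c (0, Q)) = 0) (P : A) (Q : B) :
    3 • f P (ω Q) = 3 • f P Q := by
  have htwist : f P (ω Q) + f P₀ (ω Q) = f P Q - f (-P₀) Q := by
    simpa only [← hf, map_add, AddMonoidHom.add_apply] using mixedDiff_add_twist hinv P Q
  have h₃ : ∀ Q, 3 • f P₀ Q = 0 := fun Q => (hf P₀ Q).symm ▸ three_smul_mixedDiff_eq_zero htor Q
  have h3twist := congrArg (3 • ·) htwist
  simpa only [smul_add, smul_sub, map_neg, AddMonoidHom.neg_apply, smul_neg, h₃, add_zero,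
    neg_zero, sub_zero] using h3twist

end MixedDifference

theorem nine_smul_eq_zero_of_three_smul_comp_eq {B T : Type*} [AddCommGroup B] [AddCommGroup T]
    {ω : B →+ B} (hω : ∀ Q, ω (ω Q) + ω Q + Q = 0) {g : B →+ T}
    (hg : ∀ Q, 3 • g (ω Q) = 3 • g Q) (Q : B) : 9 • g Q = 0 :=
  calc 9 • g Q = 3 • g (ω (ω Q)) + 3 • g (ω Q) + 3 • g Q := by rw [hg, hg]; abel
    _ = 0 := by rw [← smul_add, ← smul_add, ← map_add, ← map_add, hω, map_zero, smul_zero]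

open Classical in
theorem stmt_6_general {k : Type*} [Field k]
    (E₁ E₂ : WeierstrassCurve k)
    (P₀ : E₁.toAffine.Point)
    (ω : E₂.toAffine.Point →+ E₂.toAffine.Point)
    (hω : ∀ Q : E₂.toAffine.Point, ω (ω Q) + ω Q + Q = 0)
    {T : Type*} [AddCommGroup T]
    (c : E₁.toAffine.Point × E₂.toAffine.Point → T)
    (hinv : ∀ (P : E₁.toAffine.Point) (Q : E₂.toAffine.Point),
      c (P, Q) = c (P + P₀, ω Q))
    (z : E₁.toAffine.Point × E₂.toAffine.Point → T)
    (hz : ∀ (P : E₁.toAffine.Point) (Q : E₂.toAffine.Point),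
      z (P, Q) = c (P, Q) - c (P, 0) - c (0, Q) + c (0, 0))
    (hleft : ∀ (P P' : E₁.toAffine.Point) (Q : E₂.toAffine.Point),
      z (P + P', Q) = z (P, Q) + z (P', Q))
    (hright : ∀ (P : E₁.toAffine.Point) (Q Q' : E₂.toAffine.Point),
      z (P, Q + Q') = z (P, Q) + z (P, Q'))
    (htor : ∀ Q : E₂.toAffine.Point, 3 • (c (P₀, Q) - c (0, Q)) = 0) :
    ∀ (P : E₁.toAffine.Point) (Q : E₂.toAffine.Point), 9 • z (P, Q) = 0 := by
  let f : E₁.toAffine.Point →+ E₂.toAffine.Point →+ T :=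
    AddMonoidHom.mk' (fun P => AddMonoidHom.mk' (fun Q => z (P, Q)) (hright P))
      fun P P' => AddMonoidHom.ext (hleft P P')
  intro P Q
  exact nine_smul_eq_zero_of_three_smul_comp_eq hω
    (three_smul_apply_twist (f := f) hz hinv htor P) Q

open Classical in
/-- the core of the proof of the main theorem for bielliptic surfaces of
Type 5.  Let `E₁`, `E₂` be elliptic curves over a field `k`, let `P₀ ∈ E₁(k)` be
3-torsion, and let `ω` be an additive endomorphism of `E₂(k)` with
`ω (ω Q) + ω Q + Q = 0`.  Suppose `c : E₁(k) × E₂(k) → T` satisfies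
(i) `c (P, Q) = c (P + P₀, ω Q)`, (ii) the associated
`z (P, Q) = c (P, Q) - c (P, 0) - c (0, Q) + c (0, 0)` is biadditive, and
(iii) `3 • (c (P₀, Q) - c (0, Q)) = 0` for all `Q`.  Then `9 • z (P, Q) = 0`. -/
theorem stmt_6 {k : Type*} [Field k]
    (E₁ E₂ : WeierstrassCurve k) [E₁.IsElliptic] [E₂.IsElliptic]
    (P₀ : E₁.toAffine.Point) (hP₀ : 3 • P₀ = 0)
    (ω : E₂.toAffine.Point →+ E₂.toAffine.Point)
    (hω : ∀ Q : E₂.toAffine.Point, ω (ω Q) + ω Q + Q = 0)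
    {T : Type*} [AddCommGroup T]
    (c : E₁.toAffine.Point × E₂.toAffine.Point → T)
    (hinv : ∀ (P : E₁.toAffine.Point) (Q : E₂.toAffine.Point),
      c (P, Q) = c (P + P₀, ω Q))
    (z : E₁.toAffine.Point × E₂.toAffine.Point → T)
    (hz : ∀ (P : E₁.toAffine.Point) (Q : E₂.toAffine.Point),
      z (P, Q) = c (P, Q) - c (P, 0) - c (0, Q) + c (0, 0))
    (hleft : ∀ (P P' : E₁.toAffine.Point) (Q : E₂.toAffine.Point),
      z (P + P', Q) = z (P, Q) + z (P', Q))
    (hright : ∀ (P : E₁.toAffine.Point) (Q Q' : E₂.toAffine.Point),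
      z (P, Q + Q') = z (P, Q) + z (P, Q'))
    (htor : ∀ Q : E₂.toAffine.Point, 3 • (c (P₀, Q) - c (0, Q)) = 0) :
    ∀ (P : E₁.toAffine.Point) (Q : E₂.toAffine.Point), 9 • z (P, Q) = 0 :=
  stmt_6_general E₁ E₂ P₀ ω hω c hinv z hz hleft hright htor
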